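/- arXiv:1812.07243 — 9 statements merged into one kernel-verified Lean document; each statement's English description precedes it below -/
import Mathlib

section
/- Let X be a nonempty convex compact subset of a Hausdorff locally convex topological vector space, and K ⊆ X nonempty. A point x ∈ K is Aff(X)-extremal in K (i.e., whenever x is Aff(X)-between two points y, z ∈ K, then y = x and z = x) if and only if x is an extreme point of K in the classical sense (y, z ∈ K, 0 < α < 1, x = αy + (1−α)z implies x = y = z). -/
/-- φ is an affine continuous real function on X. -/
def IsAffOn {S : Type*} [AddCommGroup S] [Module ℝ S] [TopologicalSpace S]
    (X : Set S) (φ : S → ℝ) : Prop :=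
  ContinuousOn φ X ∧ ∀ a ∈ X, ∀ b ∈ X, ∀ t : ℝ, t ∈ Set.Icc (0:ℝ) 1 →
    φ (t • a + (1 - t) • b) = t * φ a + (1 - t) * φ b

/-- x is Aff(X)-between y and z. -/
def AffBetween {S : Type*} [AddCommGroup S] [Module ℝ S] [TopologicalSpace S]
    (X : Set S) (x y z : S) : Prop :=
  ∀ φ : S → ℝ, IsAffOn X φ → φ y ≤ φ x → φ z ≤ φ x → φ x = φ y ∧ φ x = φ z

/-!
If `x = α y + (1 - α) z` with `0 < α < 1`, every affine `φ` satisfies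
`φ x = α φ y + (1 - α) φ z`, so `φ y, φ z ≤ φ x` forces equality: classical betweenness implies
`Aff(X)`-betweenness. Conversely, continuous linear functionals are affine and, by Hahn–Banach,
separate points from the compact convex segment `[y, z]`; hence `Aff(X)`-betweenness places `x`
in `[y, z]`, and at an endpoint it forces `y = z = x`.
-/

open Set

section

variable {S : Type*} [AddCommGroup S] [Module ℝ S] [TopologicalSpace S]

theorem ContinuousLinearMap.isAffOn (X : Set S) (f : S →L[ℝ] ℝ) : IsAffOn X f :=
  ⟨f.continuous.continuousOn, fun a _ b _ t _ => by simp⟩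

theorem affBetween_of_mem_openSegment {X : Set S} {x y z : S} (hy : y ∈ X) (hz : z ∈ X)
    (hx : x ∈ openSegment ℝ y z) : AffBetween X x y z := by
  obtain ⟨a, b, ha, hb, hab, rfl⟩ := hx
  intro φ hφ hφy hφz
  obtain rfl : b = 1 - a := by linarith
  have hφx : φ (a • y + (1 - a) • z) = a * φ y + (1 - a) * φ z :=
    hφ.2 y hy z hz a ⟨ha.le, by linarith⟩
  constructor <;> nlinarith

theorem AffBetween.symm {X : Set S} {x y z : S} (h : AffBetween X x y z) :
    AffBetween X x z y :=
  fun φ hφ hφz hφy => (h φ hφ hφy hφz).symm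

variable [IsTopologicalAddGroup S] [ContinuousSMul ℝ S] [LocallyConvexSpace ℝ S]

theorem AffBetween.mem_segment [T2Space S] {X : Set S} {x y z : S} (h : AffBetween X x y z) :
    x ∈ segment ℝ y z := by
  by_contra hx
  have hcompact : IsCompact (segment ℝ y z) := by
    rw [← convexHull_pair]
    exact (toFinite {y, z}).isCompact_convexHull ℝ
  obtain ⟨f, u, hfu, hux⟩ :=
    geometric_hahn_banach_closed_point (convex_segment y z) hcompact.isClosed hx
  have hfy := hfu y (left_mem_segment ℝ y z)
  have hfz := hfu z (right_mem_segment ℝ y z)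
  linarith [(h f (f.isAffOn X) (by linarith) (by linarith)).1]

theorem AffBetween.eq_of_eq_right [T1Space S] {X : Set S} {x y z : S} (h : AffBetween X x y z)
    (hzx : z = x) : y = x := by
  by_contra hyx
  obtain ⟨f, hf⟩ := geometric_hahn_banach_point_point hyx
  exact hf.ne' (h f (f.isAffOn X) hf.le (by rw [hzx])).1

theorem AffBetween.mem_openSegment_or_eq [T2Space S] {X : Set S} {x y z : S}
    (h : AffBetween X x y z) : x ∈ openSegment ℝ y z ∨ (y = x ∧ z = x) := by
  have hx := h.mem_segment
  rw [← insert_endpoints_openSegment] at hx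
  rcases hx with rfl | rfl | hx
  · exact Or.inr ⟨rfl, h.symm.eq_of_eq_right rfl⟩
  · exact Or.inr ⟨h.eq_of_eq_right rfl, rfl⟩
  · exact Or.inl hx

end

theorem stmt1_general {S : Type*} [AddCommGroup S] [Module ℝ S] [TopologicalSpace S]
    [IsTopologicalAddGroup S] [ContinuousSMul ℝ S] [LocallyConvexSpace ℝ S] [T2Space S]
    (X : Set S) (K : Set S) (hKX : K ⊆ X) (x : S) :
    (∀ y ∈ K, ∀ z ∈ K, AffBetween X x y z → y = x ∧ z = x) ↔
      (∀ y ∈ K, ∀ z ∈ K, ∀ α : ℝ, 0 < α → α < 1 →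
        x = α • y + (1 - α) • z → x = y ∧ x = z) := by
  constructor
  · intro h y hy z hz α hα0 hα1 hx
    have hseg : x ∈ openSegment ℝ y z := ⟨α, 1 - α, hα0, by linarith, by ring, hx.symm⟩
    obtain ⟨rfl, rfl⟩ := h y hy z hz (affBetween_of_mem_openSegment (hKX hy) (hKX hz) hseg)
    exact ⟨rfl, rfl⟩
  · intro h y hy z hz hbetween
    rcases hbetween.mem_openSegment_or_eq with ⟨a, b, ha, hb, hab, hx⟩ | hyz
    · obtain rfl : b = 1 - a := by linarith
      obtain ⟨rfl, rfl⟩ := h y hy z hz a ha (by linarith) hx.symm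
      exact ⟨rfl, rfl⟩
    · exact hyz

theorem stmt1 {S : Type*} [AddCommGroup S] [Module ℝ S] [TopologicalSpace S]
    [IsTopologicalAddGroup S] [ContinuousSMul ℝ S] [LocallyConvexSpace ℝ S] [T2Space S]
    (X : Set S) (hXne : X.Nonempty) (hXconv : Convex ℝ X) (hXcomp : IsCompact X)
    (K : Set S) (hKX : K ⊆ X) (hKne : K.Nonempty)
    (x : S) (hx : x ∈ K) :
    (∀ y ∈ K, ∀ z ∈ K, AffBetween X x y z → y = x ∧ z = x) ↔
      (∀ y ∈ K, ∀ z ∈ K, ∀ α : ℝ, 0 < α → α < 1 →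
        x = α • y + (1 - α) • z → x = y ∧ x = z) :=
  stmt1_general X K hKX x
end

section
/- Let (K, d) be a compact metric space and Φ ⊆ C(K) a Banach space of continuous functions (with norm ‖·‖_Φ satisfying α‖·‖_Φ ≥ ‖·‖_∞ for some α > 0) that separates points of K. Then for every nonempty closed subset C ⊆ K, the set of Φ-exposed points of C is nonempty: there exist e ∈ C and φ ∈ Φ with φ(e) > φ(x) for all x ∈ C \ {e}. -/
/-- a is F-between y and z for a family F of real functions. -/
def PhiBetween {K : Type*} (F : Set (K → ℝ)) (a y z : K) : Prop :=
  ∀ φ ∈ F, φ y ≤ φ a → φ z ≤ φ a → φ a = φ y ∧ φ a = φ z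

/-- e is an F-extremal point of the set A. -/
def PhiExtremalIn {K : Type*} (F : Set (K → ℝ)) (A : Set K) (e : K) : Prop :=
  e ∈ A ∧ ∀ y ∈ A, ∀ z ∈ A, PhiBetween F e y z → y = e ∧ z = e

/-- e is an F-exposed point of the set A. -/
def PhiExposedIn {K : Type*} (F : Set (K → ℝ)) (A : Set K) (e : K) : Prop :=
  e ∈ A ∧ ∃ φ ∈ F, ∀ x ∈ A, x ≠ e → φ x < φ e

/-- f is F-convex. -/
def PhiConvex {K : Type*} (F : Set (K → ℝ)) (f : K → ℝ) : Prop :=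
  ∀ a x y : K, PhiBetween F a x y → f x ≤ f a → f y ≤ f a →
    f x = f a ∧ f y = f a

/-- the set of maximizers of f over the whole space K. -/
def Kmax {K : Type*} (f : K → ℝ) : Set K := {x | ∀ y, f y ≤ f x}

/-- the metric of uniform convergence. -/
noncomputable def rho {K : Type*} (f g : K → ℝ) : ℝ :=
  ⨆ x : K, |f x - g x| / (1 + |f x - g x|)

/-- U is open in B for the metric rho. -/
def RhoOpenIn {K : Type*} (B U : Set (K → ℝ)) : Prop :=
  U ⊆ B ∧ ∀ f ∈ U, ∃ ε > 0, ∀ g ∈ B, rho f g < ε → g ∈ U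

/-- G is dense in B for the metric rho. -/
def RhoDenseIn {K : Type*} (B G : Set (K → ℝ)) : Prop :=
  G ⊆ B ∧ ∀ f ∈ B, ∀ ε > 0, ∃ g ∈ G, rho f g < ε

/-!
Choose a sequence `ψ n ∈ Φ` with `‖ψ n‖ ≤ 2⁻ⁿ` that still separates the points of `K` (second
countability reduces the separating family to a countable one). Then `T x = (ψ n x)ₙ` embeds `K`
into `ℓ²`. Let `e ∈ C` maximize `‖T x‖²` over `C` and put `φ = ∑ ψ n (e) • ψ n`, so that
`φ x = ⟪T x, T e⟫`. For `x ∈ C`, `x ≠ e`, we get `2 ⟪T x, T e⟫ < ‖T x‖² + ‖T e‖² ≤ 2 ‖T e‖²`,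
the first inequality being strict because `T x ≠ T e`. Hence `φ` exposes `e`.
-/

theorem ContinuousMap.exists_seq_separating {K Y ι : Type*} [TopologicalSpace K]
    [SecondCountableTopology K] [TopologicalSpace Y] [T2Space Y] [Nonempty ι] (f : ι → C(K, Y))
    (hf : ∀ x y, x ≠ y → ∃ i, f i x ≠ f i y) :
    ∃ u : ℕ → ι, ∀ x y, x ≠ y → ∃ n, f (u n) x ≠ f (u n) y := by
  let s : ι → Set (K × K) := fun i => {p | f i p.1 ≠ f i p.2}
  have hs : ∀ i, IsOpen (s i) := fun i =>
    isOpen_ne_fun ((f i).continuous.comp continuous_fst) ((f i).continuous.comp continuous_snd)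
  obtain ⟨T, hTc, hT⟩ := TopologicalSpace.isOpen_iUnion_countable s hs
  obtain ⟨u, hu⟩ := (hTc.insert (Classical.arbitrary ι)).exists_eq_range (Set.insert_nonempty _ _)
  refine ⟨u, fun x y hxy => ?_⟩
  have hxy' : (x, y) ∈ ⋃ i, s i := Set.mem_iUnion.mpr (hf x y hxy)
  rw [← hT, Set.mem_iUnion₂] at hxy'
  obtain ⟨i, hiT, hi⟩ := hxy'
  obtain ⟨n, rfl⟩ : i ∈ Set.range u := hu ▸ Set.mem_insert_of_mem _ hiT
  exact ⟨n, hi⟩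

theorem exists_seq_norm_le_separating {K Φ : Type*} [TopologicalSpace K]
    [SecondCountableTopology K] [NormedAddCommGroup Φ] [NormedSpace ℝ Φ] (L : Φ →ₗ[ℝ] C(K, ℝ))
    (hsep : ∀ x y : K, x ≠ y → ∃ φ : Φ, L φ x ≠ L φ y) :
    ∃ ψ : ℕ → Φ, (∀ n, ‖ψ n‖ ≤ (1 / 2) ^ n) ∧ ∀ x y, x ≠ y → ∃ n, L (ψ n) x ≠ L (ψ n) y := by
  obtain ⟨u, hu⟩ := ContinuousMap.exists_seq_separating (fun φ => L φ) hsep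
  let c : ℕ → ℝ := fun n => (2 ^ n * (‖u n‖ + 1))⁻¹
  have hc : ∀ n, 0 < c n := fun n => by positivity
  refine ⟨fun n => c n • u n, fun n => ?_, fun x y hxy => ?_⟩
  · rw [norm_smul, Real.norm_of_nonneg (hc n).le]
    calc c n * ‖u n‖ = (1 / 2) ^ n * (‖u n‖ / (‖u n‖ + 1)) := by
          simp only [c, one_div, inv_pow]; field_simp
      _ ≤ (1 / 2) ^ n * 1 := by
          gcongr; exact div_le_one_of_le₀ (by linarith) (by positivity)
      _ = (1 / 2) ^ n := mul_one _
  · obtain ⟨n, hn⟩ := hu x y hxy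
    refine ⟨n, ?_⟩
    simpa [(hc n).ne'] using hn

theorem tsum_mul_lt_tsum_mul_self {ι : Type*} {a b : ι → ℝ}
    (hab : Summable fun i => a i * b i) (haa : Summable fun i => a i * a i)
    (hbb : Summable fun i => b i * b i) (hle : ∑' i, b i * b i ≤ ∑' i, a i * a i) (hne : a ≠ b) :
    ∑' i, a i * b i < ∑' i, a i * a i := by
  obtain ⟨i, hi⟩ := Function.ne_iff.mp hne
  have hlt : ∑' i, 2 * (a i * b i) < ∑' i, (a i * a i + b i * b i) :=
    Summable.tsum_lt_tsum (i := i) (fun j => by nlinarith [sq_nonneg (a j - b j)])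
      (by nlinarith [sq_pos_of_ne_zero (sub_ne_zero.mpr hi)]) (hab.mul_left 2) (haa.add hbb)
  rw [hab.tsum_mul_left, haa.tsum_add hbb] at hlt
  linarith

section SeparatingSeq

variable {K Φ : Type*} [TopologicalSpace K] [CompactSpace K] [NormedAddCommGroup Φ]
  [NormedSpace ℝ Φ] (L : Φ →L[ℝ] C(K, ℝ)) {ψ : ℕ → Φ} (hψ : ∀ n, ‖ψ n‖ ≤ (1 / 2) ^ n)
include hψ

theorem abs_apply_le (n : ℕ) (x : K) : |L (ψ n) x| ≤ ‖L‖ * (1 / 2) ^ n :=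
  calc |L (ψ n) x| ≤ ‖L (ψ n)‖ := (L (ψ n)).norm_coe_le_norm x
    _ ≤ ‖L‖ * ‖ψ n‖ := L.le_opNorm (ψ n)
    _ ≤ ‖L‖ * (1 / 2) ^ n := by gcongr; exact hψ n

theorem abs_apply_mul_apply_le (n : ℕ) (x y : K) :
    |L (ψ n) x * L (ψ n) y| ≤ ‖L‖ ^ 2 * (1 / 2) ^ n := by
  have hx := abs_apply_le L hψ n x
  have hy := abs_apply_le L hψ n y
  have h1 : (1 / 2 : ℝ) ^ n ≤ 1 := pow_le_one₀ (by norm_num) (by norm_num)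
  rw [abs_mul]
  calc |L (ψ n) x| * |L (ψ n) y| ≤ (‖L‖ * (1 / 2) ^ n) * (‖L‖ * (1 / 2) ^ n) :=
        mul_le_mul hx hy (abs_nonneg _) (by positivity)
    _ ≤ ‖L‖ ^ 2 * (1 / 2) ^ n := by
        rw [show (‖L‖ * (1 / 2) ^ n) * (‖L‖ * (1 / 2) ^ n) = ‖L‖ ^ 2 * (1 / 2) ^ n * (1 / 2) ^ n
          by ring]
        exact mul_le_of_le_one_right (by positivity) h1

theorem summable_apply_mul_apply (x y : K) : Summable fun n => L (ψ n) x * L (ψ n) y :=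
  (summable_geometric_two.mul_left _).of_norm_bounded (abs_apply_mul_apply_le L hψ · x y)

theorem continuous_tsum_apply_mul_self : Continuous fun x => ∑' n, L (ψ n) x * L (ψ n) x :=
  continuous_tsum (fun n => (L (ψ n)).continuous.mul (L (ψ n)).continuous)
    (summable_geometric_two.mul_left _) (fun n x => abs_apply_mul_apply_le L hψ n x x)

theorem summable_apply_smul [CompleteSpace Φ] (e : K) : Summable fun n => L (ψ n) e • ψ n := by
  refine (summable_geometric_two.mul_left ‖L‖).of_norm_bounded fun n => ?_
  rw [norm_smul]
  calc ‖L (ψ n) e‖ * ‖ψ n‖ ≤ (‖L‖ * (1 / 2) ^ n) * 1 :=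
        mul_le_mul (abs_apply_le L hψ n e) ((hψ n).trans (pow_le_one₀ (by norm_num) (by norm_num)))
          (norm_nonneg _) (by positivity)
    _ = ‖L‖ * (1 / 2) ^ n := mul_one _

theorem apply_tsum_apply_smul [CompleteSpace Φ] (e x : K) :
    L (∑' n, L (ψ n) e • ψ n) x = ∑' n, L (ψ n) e * L (ψ n) x := by
  have hs := summable_apply_smul L hψ e
  rw [L.map_tsum hs, ← ContinuousMap.tsum_apply (hs.mapL L)]
  simp only [map_smul, ContinuousMap.smul_apply, smul_eq_mul]

theorem exists_forall_lt_of_separating_seq [CompleteSpace Φ] {C : Set K} (hC : IsCompact C)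
    (hCne : C.Nonempty) (hsep : ∀ x ∈ C, ∀ y ∈ C, x ≠ y → ∃ n, L (ψ n) x ≠ L (ψ n) y) :
    ∃ e ∈ C, ∃ φ : Φ, ∀ x ∈ C, x ≠ e → L φ x < L φ e := by
  obtain ⟨e, heC, hmax⟩ :=
    hC.exists_isMaxOn hCne (continuous_tsum_apply_mul_self L hψ).continuousOn
  refine ⟨e, heC, ∑' n, L (ψ n) e • ψ n, fun x hxC hxe => ?_⟩
  obtain ⟨n, hn⟩ := hsep x hxC e heC hxe
  rw [apply_tsum_apply_smul L hψ, apply_tsum_apply_smul L hψ]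
  exact tsum_mul_lt_tsum_mul_self (summable_apply_mul_apply L hψ e x)
    (summable_apply_mul_apply L hψ e e) (summable_apply_mul_apply L hψ x x) (hmax hxC)
    (fun h => hn (congrFun h n).symm)

end SeparatingSeq

theorem stmt4_general {K : Type*} [MetricSpace K] [CompactSpace K]
    {Φ : Type*} [NormedAddCommGroup Φ] [NormedSpace ℝ Φ] [CompleteSpace Φ]
    (ι : Φ →ₗ[ℝ] C(K, ℝ))
    (α : ℝ) (hnorm : ∀ φ : Φ, ‖ι φ‖ ≤ α * ‖φ‖)
    (hsep : ∀ x y : K, x ≠ y → ∃ φ : Φ, ι φ x ≠ ι φ y)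
    (C : Set K) (hCne : C.Nonempty) (hCcl : IsClosed C) :
    ∃ e ∈ C, ∃ φ : Φ, ∀ x ∈ C, x ≠ e → ι φ x < ι φ e := by
  obtain ⟨ψ, hψ, hψsep⟩ := exists_seq_norm_le_separating ι hsep
  exact exists_forall_lt_of_separating_seq (ι.mkContinuous α hnorm) hψ hCcl.isCompact hCne
    fun x _ y _ hxy => hψsep x y hxy

theorem stmt4 {K : Type*} [MetricSpace K] [CompactSpace K] [Nonempty K]
    {Φ : Type*} [NormedAddCommGroup Φ] [NormedSpace ℝ Φ] [CompleteSpace Φ]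
    (ι : Φ →ₗ[ℝ] C(K, ℝ)) (hinj : Function.Injective ι)
    (α : ℝ) (hα : 0 < α) (hnorm : ∀ φ : Φ, ‖ι φ‖ ≤ α * ‖φ‖)
    (hsep : ∀ x y : K, x ≠ y → ∃ φ : Φ, ι φ x ≠ ι φ y)
    (C : Set K) (hCne : C.Nonempty) (hCcl : IsClosed C) :
    ∃ e ∈ C, ∃ φ : Φ, ∀ x ∈ C, x ≠ e → ι φ x < ι φ e :=
  stmt4_general ι α hnorm hsep C hCne hCcl
end

section
/- Let (K, d) be a compact metric space and Φ ⊆ C(K) a Banach space separating points of K with α‖·‖_Φ ≥ ‖·‖_∞ for some α > 0. Let I be a nonempty index set and for each i ∈ I let f_i : K → ℝ be a Φ-convex upper semicontinuous function. If the intersection of the maximizer sets ⋂_{i∈I} K_max(f_i) is nonempty, then the set of Φ-exposed points of ⋂_{i∈I} K_max(f_i) is nonempty and contained in the set of Φ-extremal points of K; in particular, there is a common Φ-extremal point e of K at which every f_i attains its maximum over K. -/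
open Set Filter

theorem UpperSemicontinuous.isClosed_Kmax {X : Type*} [TopologicalSpace X] {f : X → ℝ}
    (hf : UpperSemicontinuous f) : IsClosed (Kmax f) := by
  have hKmax : Kmax f = ⋂ y, f ⁻¹' Ici (f y) := by
    ext x
    simp [Kmax]
  rw [hKmax]
  exact isClosed_iInter fun y => upperSemicontinuous_iff_isClosed_preimage.1 hf (f y)

section Between

variable {K : Type*} {F : Set (K → ℝ)}

theorem PhiConvex.mem_Kmax_of_phiBetween {f : K → ℝ} (hf : PhiConvex F f) {a y z : K}
    (ha : a ∈ Kmax f) (h : PhiBetween F a y z) : y ∈ Kmax f ∧ z ∈ Kmax f := by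
  obtain ⟨hy, hz⟩ := hf a y z h (ha y) (ha z)
  exact ⟨fun w => hy ▸ ha w, fun w => hz ▸ ha w⟩

theorem PhiExposedIn.phiExtremalIn {A : Set K} {e : K} (h : PhiExposedIn F A e) :
    PhiExtremalIn F A e := by
  obtain ⟨heA, φ, hφF, hφ⟩ := h
  have hle : ∀ x ∈ A, φ x ≤ φ e := fun x hx =>
    (eq_or_ne x e).elim (fun hxe => hxe ▸ le_rfl) fun hxe => (hφ x hx hxe).le
  refine ⟨heA, fun y hy z hz hbet => ?_⟩
  obtain ⟨hy', hz'⟩ := hbet φ hφF (hle y hy) (hle z hz)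
  exact ⟨by_contra fun hye => (hφ y hy hye).ne' hy', by_contra fun hze => (hφ z hz hze).ne' hz'⟩

theorem PhiExtremalIn.univ_of_phiBetween_mem {A : Set K} {e : K} (h : PhiExtremalIn F A e)
    (hA : ∀ y z, PhiBetween F e y z → y ∈ A ∧ z ∈ A) : PhiExtremalIn F univ e :=
  ⟨mem_univ e, fun y _ z _ hbet => h.2 y (hA y z hbet).1 z (hA y z hbet).2 hbet⟩

theorem PhiExposedIn.phiExtremalIn_univ {I : Type*} {f : I → K → ℝ}
    (hconv : ∀ i, PhiConvex F (f i)) {e : K} (he : PhiExposedIn F (⋂ i, Kmax (f i)) e) :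
    PhiExtremalIn F univ e := by
  refine he.phiExtremalIn.univ_of_phiBetween_mem fun y z hbet => ?_
  have hmem := fun i => (hconv i).mem_Kmax_of_phiBetween (mem_iInter.1 he.1 i) hbet
  exact ⟨mem_iInter.2 fun i => (hmem i).1, mem_iInter.2 fun i => (hmem i).2⟩

end Between

def approxKmax {K : Type*} (f : K → ℝ) (ε : ℝ) : Set K := {x | ∀ y, f y ≤ f x + ε}

def SmallApproxKmax {K : Type*} [MetricSpace K] (r : ℝ) (f : K → ℝ) : Prop :=
  ∃ ε > 0, ∀ x ∈ approxKmax f ε, ∀ y ∈ approxKmax f ε, dist x y < r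

section Compact

variable {K : Type*} [MetricSpace K] [CompactSpace K]

theorem approxKmax_subset_of_dist_le {f g : C(K, ℝ)} {δ : ℝ} (h : dist f g ≤ δ) (η : ℝ) :
    approxKmax f η ⊆ approxKmax g (η + 2 * δ) := by
  have hfg : ∀ y, |f y - g y| ≤ δ := fun y =>
    (Real.dist_eq _ _).symm.trans_le ((ContinuousMap.dist_apply_le_dist y).trans h)
  intro x hx y
  have := hx y
  have := abs_le.1 (hfg x)
  have := abs_le.1 (hfg y)
  linarith

theorem isOpen_setOf_smallApproxKmax (r : ℝ) : IsOpen {f : C(K, ℝ) | SmallApproxKmax r f} := by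
  refine Metric.isOpen_iff.2 fun f ⟨ε, hε, hf⟩ => ⟨ε / 4, by positivity, fun g hg => ?_⟩
  have hsub : approxKmax g (ε / 2) ⊆ approxKmax f ε := by
    convert approxKmax_subset_of_dist_le (Metric.mem_ball.1 hg).le (ε / 2) using 2
    ring
  exact ⟨ε / 2, by positivity, fun x hx y hy => hf x (hsub hx) y (hsub hy)⟩

theorem smallApproxKmax_of_forall_dist_lt {f : K → ℝ} (hf : Continuous f) {r : ℝ}
    (h : ∀ x ∈ Kmax f, ∀ y ∈ Kmax f, dist x y < r) : SmallApproxKmax r f := by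
  set Q : Set (K × K) := {p | r ≤ dist p.1 p.2}
  rcases Q.eq_empty_or_nonempty with hQ | hQ
  · exact ⟨1, one_pos, fun x _ y _ => not_le.1 fun hxy => hQ.subset (show (x, y) ∈ Q from hxy)⟩
  have hQc : IsCompact Q :=
    (isClosed_le continuous_const (continuous_fst.dist continuous_snd)).isCompact
  -- On pairs at distance `≥ r`, the smaller of the two values stays a fixed gap below `max f`.
  obtain ⟨q, hqQ, hq⟩ := hQc.exists_isMaxOn hQ
    ((hf.comp continuous_fst).min (hf.comp continuous_snd)).continuousOn
  obtain ⟨e, -, he⟩ := isCompact_univ.exists_isMaxOn ⟨q.1, mem_univ _⟩ hf.continuousOn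
  have hlt : min (f q.1) (f q.2) < f e := by
    by_contra! hge
    have h1 : q.1 ∈ Kmax f := fun y => (he (mem_univ y)).trans (hge.trans (min_le_left _ _))
    have h2 : q.2 ∈ Kmax f := fun y => (he (mem_univ y)).trans (hge.trans (min_le_right _ _))
    exact (h _ h1 _ h2).not_ge hqQ
  refine ⟨(f e - min (f q.1) (f q.2)) / 2, by linarith, fun x hx y hy => not_le.1 fun hxy => ?_⟩
  have hxy' : min (f x) (f y) ≤ min (f q.1) (f q.2) := hq (show (x, y) ∈ Q from hxy)
  have := hx e
  have := hy e
  rcases min_le_iff.1 hxy' with h' | h' <;> linarith [min_le_left (f q.1) (f q.2)]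

theorem exists_finset_separating {ι : Type*} (ψ : ι → C(K, ℝ))
    (hsep : ∀ x y, x ≠ y → ∃ i, ψ i x ≠ ψ i y) {r : ℝ} (hr : 0 < r) :
    ∃ s : Finset ι, ∀ x y, r ≤ dist x y → ∃ i ∈ s, ψ i x ≠ ψ i y := by
  have hQ : IsCompact {p : K × K | r ≤ dist p.1 p.2} :=
    (isClosed_le continuous_const (continuous_fst.dist continuous_snd)).isCompact
  obtain ⟨s, hs⟩ := hQ.elim_finite_subcover (fun i => {p : K × K | ψ i p.1 ≠ ψ i p.2})
    (fun i => isOpen_ne_fun ((ψ i).continuous.comp continuous_fst)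
      ((ψ i).continuous.comp continuous_snd))
    fun p hp => mem_iUnion.2 (hsep p.1 p.2 (dist_pos.1 (hr.trans_le hp)))
  exact ⟨s, fun x y hxy => by simpa using hs (show (x, y) ∈ _ from hxy)⟩

end Compact

theorem HasFDerivAt.eq_of_le_of_eq {E : Type*} [NormedAddCommGroup E] [NormedSpace ℝ E]
    {u v : E → ℝ} {u' v' : E →L[ℝ] ℝ} {t : E} (hu : HasFDerivAt u u' t)
    (hv : HasFDerivAt v v' t) (hle : ∀ s, u s ≤ v s) (heq : u t = v t) : u' = v' := by
  have hmin : IsLocalMin (fun s => v s - u s) t :=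
    Eventually.of_forall fun s => by linarith [hle s]
  exact (sub_eq_zero.1 (hmin.hasFDerivAt_eq_zero (hv.sub hu))).symm

section Perturbation

variable {K : Type*} [MetricSpace K] [CompactSpace K] [Nonempty K]
  {E : Type*} [NormedAddCommGroup E] [NormedSpace ℝ E]

theorem lipschitzWith_iSup_add_apply (g : C(K, ℝ)) (Q : E →L[ℝ] C(K, ℝ)) :
    LipschitzWith ‖Q‖₊ fun t => ⨆ x, (g + Q t) x := by
  refine LipschitzWith.of_le_add_mul _ fun t u => ciSup_le fun x => ?_
  have hx : (g + Q t) x ≤ (g + Q u) x + ‖Q‖₊ * dist t u := by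
    have := (ContinuousMap.dist_apply_le_dist x).trans
      ((dist_add_left g (Q t) (Q u)).trans_le (Q.lipschitz.dist_le_mul t u))
    linarith [le_abs_self ((g + Q t) x - (g + Q u) x), Real.dist_eq ((g + Q t) x) ((g + Q u) x)]
  linarith [le_ciSup (isCompact_range (g + Q u).continuous).bddAbove x]

theorem exists_mem_forall_Kmax_apply_eq [FiniteDimensional ℝ E] (g : C(K, ℝ))
    (Q : E →L[ℝ] C(K, ℝ)) {U : Set E} (hU : IsOpen U) (hUne : U.Nonempty) :
    ∃ t ∈ U, ∀ x ∈ Kmax ⇑(g + Q t), ∀ y ∈ Kmax ⇑(g + Q t), ∀ u, Q u x = Q u y := by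
  borelize E
  set V : E → ℝ := fun t => ⨆ x, (g + Q t) x
  obtain ⟨t, htU, htV⟩ : ∃ t ∈ U, DifferentiableAt ℝ V t :=
    MeasureTheory.Measure.exists_mem_of_measure_ne_zero_of_ae
      (hU.measure_ne_zero MeasureTheory.Measure.addHaar hUne)
      (MeasureTheory.ae_restrict_of_ae (lipschitzWith_iSup_add_apply g Q).ae_differentiableAt)
  -- At a maximizer `x`, `V` touches the affine map `s ↦ (g + Q s) x` from above at `t`.
  have hderiv : ∀ x ∈ Kmax ⇑(g + Q t), (ContinuousMap.evalCLM ℝ x).comp Q = fderiv ℝ V t := by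
    intro x hx
    refine HasFDerivAt.eq_of_le_of_eq
      (((ContinuousMap.evalCLM ℝ x).comp Q).hasFDerivAt.const_add (g x))
      htV.hasFDerivAt (fun s => le_ciSup (isCompact_range (g + Q s).continuous).bddAbove x) ?_
    exact le_antisymm (le_ciSup (isCompact_range (g + Q t).continuous).bddAbove x) (ciSup_le hx)
  refine ⟨t, htU, fun x hx y hy u => ?_⟩
  simpa using congrArg (· u) ((hderiv x hx).trans (hderiv y hy).symm)

end Perturbation

section Variational

variable {K : Type*} [MetricSpace K] [CompactSpace K] [Nonempty K]
  {Φ : Type*} [NormedAddCommGroup Φ] [NormedSpace ℝ Φ]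

theorem dense_setOf_smallApproxKmax (T : Φ →L[ℝ] C(K, ℝ))
    (hsep : ∀ x y, x ≠ y → ∃ φ, T φ x ≠ T φ y) {r : ℝ} (hr : 0 < r) :
    Dense {φ | SmallApproxKmax r (T φ)} := by
  classical
  obtain ⟨s, hs⟩ := exists_finset_separating (fun φ => T φ) hsep hr
  let P : (s → ℝ) →L[ℝ] Φ :=
    LinearMap.toContinuousLinearMap (Fintype.linearCombination ℝ fun j : s => (j : Φ))
  refine Metric.dense_iff.2 fun φ₀ δ hδ => ?_
  obtain ⟨t, ht, hmax⟩ := exists_mem_forall_Kmax_apply_eq (T φ₀) (T ∘L P)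
    ((Metric.isOpen_ball (x := 0) (ε := δ)).preimage P.continuous) ⟨0, by simpa using hδ⟩
  refine ⟨φ₀ + P t, by simpa using ht, smallApproxKmax_of_forall_dist_lt (T _).continuous
    fun x hx y hy => not_le.1 fun hxy => ?_⟩
  obtain ⟨j, hj, hne⟩ := hs x y hxy
  rw [map_add] at hx hy
  apply hne
  simpa [P] using hmax x hx y hy (Pi.single ⟨j, hj⟩ 1)

theorem eventually_residual_exists_forall_ne_lt [CompleteSpace Φ] (T : Φ →L[ℝ] C(K, ℝ))
    (hsep : ∀ x y, x ≠ y → ∃ φ, T φ x ≠ T φ y) :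
    ∀ᶠ φ in residual Φ, ∃ e, ∀ x, x ≠ e → T φ x < T φ e := by
  have hsmall : ∀ᶠ φ in residual Φ, ∀ n : ℕ, SmallApproxKmax (1 / (n + 1)) (T φ) :=
    eventually_countable_forall.2 fun n => residual_of_dense_open
      ((isOpen_setOf_smallApproxKmax _).preimage T.continuous)
      (dense_setOf_smallApproxKmax T hsep (by positivity))
  refine hsmall.mono fun φ hφ => ?_
  obtain ⟨e, -, he⟩ := isCompact_univ.exists_isMaxOn univ_nonempty (T φ).continuous.continuousOn
  rw [isMaxOn_univ_iff] at he
  refine ⟨e, fun x hxe => (he x).lt_of_ne fun hx => hxe ?_⟩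
  have hmem : ∀ ε > 0, x ∈ approxKmax (T φ) ε ∧ e ∈ approxKmax (T φ) ε := fun ε hε =>
    ⟨fun y => by linarith [he y], fun y => by linarith [he y]⟩
  refine eq_of_forall_dist_le fun ε hε => ?_
  obtain ⟨n, hn⟩ := exists_nat_one_div_lt hε
  obtain ⟨η, hη, hsmall⟩ := hφ n
  exact (hsmall x (hmem η hη).1 e (hmem η hη).2).le.trans hn.le

end Variational

theorem exists_phiExposedIn {K : Type*} [MetricSpace K] [CompactSpace K]
    {Φ : Type*} [NormedAddCommGroup Φ] [NormedSpace ℝ Φ] [CompleteSpace Φ]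
    (ι : Φ →ₗ[ℝ] C(K, ℝ)) {α : ℝ} (hnorm : ∀ φ, ‖ι φ‖ ≤ α * ‖φ‖)
    (hsep : ∀ x y, x ≠ y → ∃ φ, ι φ x ≠ ι φ y) {A : Set K} (hA : IsClosed A)
    (hAne : A.Nonempty) : ∃ e, PhiExposedIn {g | ∃ φ, g = ⇑(ι φ)} A e := by
  have : CompactSpace A := isCompact_iff_compactSpace.1 hA.isCompact
  have : Nonempty A := hAne.to_subtype
  let T : Φ →L[ℝ] C(A, ℝ) :=
    (ContinuousMap.compCLM ℝ ℝ (ContinuousMap.restrict A (.id K))).comp (ι.mkContinuous α hnorm)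
  obtain ⟨φ, e, he⟩ := (dense_of_mem_residual (eventually_residual_exists_forall_ne_lt T
    fun x y hxy => hsep x y (Subtype.coe_injective.ne hxy))).nonempty
  exact ⟨e, e.2, ι φ, ⟨φ, rfl⟩, fun x hx hxe => he ⟨x, hx⟩ fun h => hxe (congrArg Subtype.val h)⟩

theorem stmt6_general {K : Type*} [MetricSpace K] [CompactSpace K]
    {Φ : Type*} [NormedAddCommGroup Φ] [NormedSpace ℝ Φ] [CompleteSpace Φ]
    (ι : Φ →ₗ[ℝ] C(K, ℝ))
    (α : ℝ) (hnorm : ∀ φ : Φ, ‖ι φ‖ ≤ α * ‖φ‖)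
    (hsep : ∀ x y : K, x ≠ y → ∃ φ : Φ, ι φ x ≠ ι φ y)
    (F : Set (K → ℝ)) (hFdef : F = {g | ∃ φ : Φ, g = ⇑(ι φ)})
    {I : Type*} (f : I → K → ℝ)
    (husc : ∀ i, UpperSemicontinuous (f i))
    (hconv : ∀ i, PhiConvex F (f i))
    (hne : (⋂ i, Kmax (f i)).Nonempty) :
    (∃ e, PhiExposedIn F (⋂ i, Kmax (f i)) e) ∧
    (∀ e, PhiExposedIn F (⋂ i, Kmax (f i)) e → PhiExtremalIn F Set.univ e) ∧
    ∃ e, PhiExtremalIn F Set.univ e ∧ ∀ i, ∀ y, f i y ≤ f i e := by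
  subst hFdef
  obtain ⟨e, he⟩ :=
    exists_phiExposedIn ι hnorm hsep (isClosed_iInter fun i => (husc i).isClosed_Kmax) hne
  have hext : ∀ e, PhiExposedIn _ (⋂ i, Kmax (f i)) e → PhiExtremalIn _ univ e :=
    fun e he => he.phiExtremalIn_univ hconv
  exact ⟨⟨e, he⟩, hext, e, hext e he, fun i => mem_iInter.1 he.1 i⟩

theorem stmt6 {K : Type*} [MetricSpace K] [CompactSpace K] [Nonempty K]
    {Φ : Type*} [NormedAddCommGroup Φ] [NormedSpace ℝ Φ] [CompleteSpace Φ]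
    (ι : Φ →ₗ[ℝ] C(K, ℝ)) (hinj : Function.Injective ι)
    (α : ℝ) (hα : 0 < α) (hnorm : ∀ φ : Φ, ‖ι φ‖ ≤ α * ‖φ‖)
    (hsep : ∀ x y : K, x ≠ y → ∃ φ : Φ, ι φ x ≠ ι φ y)
    (F : Set (K → ℝ)) (hFdef : F = {g | ∃ φ : Φ, g = ⇑(ι φ)})
    {I : Type*} [Nonempty I] (f : I → K → ℝ)
    (husc : ∀ i, UpperSemicontinuous (f i))
    (hconv : ∀ i, PhiConvex F (f i))
    (hne : (⋂ i, Kmax (f i)).Nonempty) :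
    (∃ e, PhiExposedIn F (⋂ i, Kmax (f i)) e) ∧
    (∀ e, PhiExposedIn F (⋂ i, Kmax (f i)) e → PhiExtremalIn F Set.univ e) ∧
    ∃ e, PhiExtremalIn F Set.univ e ∧ ∀ i, ∀ y, f i y ≤ f i e :=
  stmt6_general ι α hnorm hsep F hFdef f husc hconv hne
end

section
/- Let (K, d) be a compact metric space and Φ a family of continuous functions on K. Let (f_i)_{i∈I} be Φ-convex upper semicontinuous functions on K with ⋂_{i∈I} K_max(f_i) ≠ ∅. Then every Φ-extremal point of ⋂_{i∈I} K_max(f_i) is a Φ-extremal point of K. -/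
/- At a common maximizer `e`, Φ-convexity of each `f i` forces any `y, z` having `e` Φ-between
them to attain the same values `f i y = f i e = f i z`; hence `y` and `z` are common maximizers
as well, and Φ-extremality of `e` in the set of common maximizers gives `y = z = e`. -/

theorem mem_Kmax_of_eq {K : Type*} {f : K → ℝ} {e w : K} (he : e ∈ Kmax f) (hw : f w = f e) :
    w ∈ Kmax f := fun x => hw ▸ he x

theorem PhiConvex.eq_of_phiBetween_of_mem_Kmax {K : Type*} {F : Set (K → ℝ)} {f : K → ℝ}
    (hf : PhiConvex F f) {e y z : K} (he : e ∈ Kmax f) (hb : PhiBetween F e y z) :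
    f y = f e ∧ f z = f e :=
  hf e y z hb (he y) (he z)

theorem PhiBetween.mem_iInter_Kmax {K : Type*} {F : Set (K → ℝ)} {I : Type*} {f : I → K → ℝ}
    (hconv : ∀ i, PhiConvex F (f i)) {e y z : K} (he : e ∈ ⋂ i, Kmax (f i))
    (hb : PhiBetween F e y z) : y ∈ ⋂ i, Kmax (f i) ∧ z ∈ ⋂ i, Kmax (f i) := by
  rw [Set.mem_iInter] at he
  have hval i := (hconv i).eq_of_phiBetween_of_mem_Kmax (he i) hb
  exact ⟨Set.mem_iInter.2 fun i => mem_Kmax_of_eq (he i) (hval i).1,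
    Set.mem_iInter.2 fun i => mem_Kmax_of_eq (he i) (hval i).2⟩

theorem stmt7_general {K : Type*}
    (F : Set (K → ℝ))
    {I : Type*} (f : I → K → ℝ)
    (hconv : ∀ i, PhiConvex F (f i)) :
    ∀ e, PhiExtremalIn F (⋂ i, Kmax (f i)) e → PhiExtremalIn F Set.univ e := by
  rintro e ⟨he, hext⟩
  refine ⟨Set.mem_univ e, fun y _ z _ hb => ?_⟩
  obtain ⟨hy, hz⟩ := hb.mem_iInter_Kmax hconv he
  exact hext y hy z hz hb

theorem stmt7 {K : Type*} [MetricSpace K] [CompactSpace K]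
    (F : Set (K → ℝ)) (hF : ∀ φ ∈ F, Continuous φ)
    {I : Type*} [Nonempty I] (f : I → K → ℝ)
    (husc : ∀ i, UpperSemicontinuous (f i))
    (hconv : ∀ i, PhiConvex F (f i))
    (hne : (⋂ i, Kmax (f i)).Nonempty) :
    ∀ e, PhiExtremalIn F (⋂ i, Kmax (f i)) e → PhiExtremalIn F Set.univ e :=
  stmt7_general F f hconv
end

section
/- Let (K, d) be a compact metric space and B a set of upper semicontinuous real functions on K, equipped with ρ_∞(f,g) = sup_x |f(x)−g(x)|/(1+|f(x)−g(x)|). For each n ≥ 1, the set O_n = {f ∈ B : ∃ x_n ∈ K, f(x_n) > sup{f(x) : d(x, x_n) ≥ 1/n}} is open in (B, ρ_∞), and ⋂_{n≥1} O_n = {f ∈ B : f has a unique (strict) maximum on K}. -/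
open Set

def IsStrictPeak {K β : Type*} [PseudoMetricSpace K] [LT β] (f : K → β) (x₀ : K) (r : ℝ) :
    Prop :=
  ∀ x, r ≤ dist x x₀ → f x < f x₀

section Peaks

variable {K β : Type*} [PseudoMetricSpace K] [LinearOrder β] {f : K → β} {x₀ : K} {r s : ℝ}

lemma IsStrictPeak.mono (h : IsStrictPeak f x₀ r) (hrs : r ≤ s) : IsStrictPeak f x₀ s :=
  fun x hx => h x (hrs.trans hx)

lemma isStrictPeak_of_forall_ne_lt (h : ∀ x, x ≠ x₀ → f x < f x₀) (hr : 0 < r) :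
    IsStrictPeak f x₀ r := by
  refine fun x hx => h x ?_
  rintro rfl
  rw [dist_self] at hx
  exact hx.not_gt hr

lemma forall_exists_isStrictPeak_iff_forall_nat :
    (∀ r > 0, ∃ x₀, IsStrictPeak f x₀ r) ↔
      ∀ n : ℕ, 1 ≤ n → ∃ x₀, IsStrictPeak f x₀ (1 / n) := by
  refine ⟨fun h n hn => h _ (by positivity), fun h r hr => ?_⟩
  obtain ⟨n, hn⟩ := exists_nat_one_div_lt hr
  obtain ⟨x₀, hx₀⟩ := h (n + 1) (Nat.le_add_left 1 n)
  exact ⟨x₀, hx₀.mono (by exact_mod_cast hn.le)⟩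

end Peaks

lemma exists_forall_ne_lt_of_forall_exists_isStrictPeak {K β : Type*} [MetricSpace K]
    [CompactSpace K] [LinearOrder β] {f : K → β} (hf : UpperSemicontinuous f)
    (h : ∀ r > 0, ∃ x₀, IsStrictPeak f x₀ r) :
    ∃ p, ∀ x, x ≠ p → f x < f p := by
  obtain ⟨x₁, -⟩ := h 1 one_pos
  obtain ⟨p, -, hp⟩ :=
    (hf.upperSemicontinuousOn univ).exists_isMaxOn ⟨x₁, mem_univ _⟩ isCompact_univ
  refine ⟨p, fun x hxp => ?_⟩
  obtain ⟨xr, hxr⟩ := h (dist x p / 2) (half_pos (dist_pos.2 hxp))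
  have hp_near : dist p xr < dist x p / 2 := not_le.1 fun hle =>
    (hxr p hle).not_ge (hp (mem_univ xr))
  have hx_far : dist x p / 2 ≤ dist x xr := by linarith [dist_triangle x xr p, dist_comm p xr]
  exact (hxr x hx_far).trans_le (hp (mem_univ xr))

lemma UpperSemicontinuousOn.exists_pos_forall_add_le_of_forall_lt {K : Type*}
    [TopologicalSpace K] {f : K → ℝ} {s : Set K} {c : ℝ} (hf : UpperSemicontinuousOn f s)
    (hs : IsCompact s) (h : ∀ x ∈ s, f x < c) : ∃ δ > 0, ∀ x ∈ s, f x + δ ≤ c := by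
  rcases s.eq_empty_or_nonempty with rfl | hne
  · exact ⟨1, one_pos, fun x hx => hx.elim⟩
  obtain ⟨p, hps, hp⟩ := hf.exists_isMaxOn hne hs
  exact ⟨c - f p, sub_pos.2 (h p hps), fun x hx => by linarith [show f x ≤ f p from hp hx]⟩

lemma abs_sub_lt_of_rho_lt {K : Type*} {f g : K → ℝ} {δ : ℝ} (hδ : 0 < δ)
    (h : rho f g < δ / (1 + δ)) (x : K) : |f x - g x| < δ := by
  have hbdd : BddAbove (range fun y => |f y - g y| / (1 + |f y - g y|)) := by
    refine ⟨1, ?_⟩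
    rintro _ ⟨y, rfl⟩
    exact (div_le_one (by positivity)).2 (by linarith)
  have hx : |f x - g x| / (1 + |f x - g x|) < δ / (1 + δ) := (le_ciSup hbdd x).trans_lt h
  rw [div_lt_div_iff₀ (by positivity) (by positivity)] at hx
  linarith

lemma IsStrictPeak.exists_pos_forall_rho_lt {K : Type*} [PseudoMetricSpace K] [CompactSpace K]
    {f : K → ℝ} {x₀ : K} {r : ℝ} (hf : UpperSemicontinuous f) (h : IsStrictPeak f x₀ r) :
    ∃ ε > 0, ∀ g, rho f g < ε → IsStrictPeak g x₀ r := by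
  have hclosed : IsClosed {x | r ≤ dist x x₀} := isClosed_le continuous_const (by fun_prop)
  obtain ⟨δ, hδ, hgap⟩ :=
    (hf.upperSemicontinuousOn _).exists_pos_forall_add_le_of_forall_lt hclosed.isCompact h
  refine ⟨δ / 2 / (1 + δ / 2), by positivity, fun g hg x hx => ?_⟩
  have hclose := abs_sub_lt_of_rho_lt (half_pos hδ) hg
  linarith [hgap x hx, (abs_lt.1 (hclose x)).1, (abs_lt.1 (hclose x₀)).2]

theorem stmt9_general {K : Type*} [MetricSpace K] [CompactSpace K]
    (B : Set (K → ℝ)) (hB : ∀ f ∈ B, UpperSemicontinuous f)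
    (O : ℕ → Set (K → ℝ))
    (hOdef : ∀ n, O n = {f ∈ B | ∃ x₀ : K,
      ∀ x : K, (1 : ℝ) / n ≤ dist x x₀ → f x < f x₀}) :
    (∀ n : ℕ, 1 ≤ n → RhoOpenIn B (O n)) ∧
      (⋂ n ∈ {n : ℕ | 1 ≤ n}, O n) =
        {f ∈ B | ∃ x₀ : K, ∀ x : K, x ≠ x₀ → f x < f x₀} := by
  refine ⟨fun n _ => ?_, ?_⟩
  · rw [hOdef n]
    refine ⟨sep_subset _ _, ?_⟩
    rintro f ⟨hfB, x₀, hx₀⟩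
    obtain ⟨ε, hε, hg⟩ := IsStrictPeak.exists_pos_forall_rho_lt (hB f hfB) hx₀
    exact ⟨ε, hε, fun g hgB hfg => ⟨hgB, x₀, hg g hfg⟩⟩
  · ext f
    simp only [hOdef, mem_iInter, mem_ofPred_eq]
    refine ⟨fun h => ?_, fun ⟨hfB, x₀, hx₀⟩ n hn =>
      ⟨hfB, x₀, isStrictPeak_of_forall_ne_lt hx₀ (by positivity)⟩⟩
    have hfB := (h 1 le_rfl).1
    refine ⟨hfB, exists_forall_ne_lt_of_forall_exists_isStrictPeak (hB f hfB) ?_⟩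
    exact forall_exists_isStrictPeak_iff_forall_nat.2 fun n hn => (h n hn).2

theorem stmt9 {K : Type*} [MetricSpace K] [CompactSpace K] [Nonempty K]
    (B : Set (K → ℝ)) (hB : ∀ f ∈ B, UpperSemicontinuous f)
    (O : ℕ → Set (K → ℝ))
    (hOdef : ∀ n, O n = {f ∈ B | ∃ x₀ : K,
      ∀ x : K, (1 : ℝ) / n ≤ dist x x₀ → f x < f x₀}) :
    (∀ n : ℕ, 1 ≤ n → RhoOpenIn B (O n)) ∧
      (⋂ n ∈ {n : ℕ | 1 ≤ n}, O n) =
        {f ∈ B | ∃ x₀ : K, ∀ x : K, x ≠ x₀ → f x < f x₀} :=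
  stmt9_general B hB O hOdef
end

section
/- Let X be a nonempty convex compact metrizable subset of a Hausdorff locally convex topological vector space, and K ⊆ X a nonempty closed subset (not necessarily convex). Then K has an affine exposed point, i.e., there exist e ∈ K and a continuous affine function φ : X → ℝ with φ(e) > φ(x) for all x ∈ K \ {e}; moreover every affine exposed point of K is an extreme point of K. -/
/-- x is an extreme point of K in the classical sense. -/
def ExtremeIn {S : Type*} [AddCommGroup S] [Module ℝ S]
    (K : Set S) (x : S) : Prop :=
  x ∈ K ∧ ∀ y ∈ K, ∀ z ∈ K, ∀ α : ℝ, 0 < α → α < 1 →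
    x = α • y + (1 - α) • z → x = y ∧ x = z

/-- the set of maximizers of f over K. -/
def KmaxOn {S : Type*} (K : Set S) (f : S → ℝ) : Set S :=
  {x ∈ K | ∀ y ∈ K, f y ≤ f x}


/-!
Countably many continuous linear functionals separate the points of the compact metrizable set `X`;
rescaled so that `|uₙ| ≤ 2⁻ⁿ` on `X`, they give a continuous injective affine map `T x = (uₙ x)ₙ`
from `X` to `ℓ²`. If `e` maximises `‖T x‖` over the compact set `K`, the continuous affine function
`x ↦ ⟪T e, T x⟫` exposes `e`, because `0 < ‖T x - T e‖²` for `x ≠ e`. A point where an affine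
function has a strict maximum is never a proper convex combination of other points of `K`.
-/

open Set
open scoped InnerProductSpace lp

theorem SeparatingDual.exists_seq_injOn {R V : Type*} [Ring R] [TopologicalSpace R] [T2Space R]
    [AddCommGroup V] [TopologicalSpace V] [Module R V] [SeparatingDual R V]
    (X : Set V) [SecondCountableTopology X] :
    ∃ L : ℕ → StrongDual R V, ∀ x ∈ X, ∀ y ∈ X, (∀ n, L n x = L n y) → x = y := by
  let U : StrongDual R V → Set (X × X) := fun f => {p | f p.1 ≠ f p.2}
  have hU : ∀ f, IsOpen (U f) := fun f =>
    isOpen_ne_fun (f.continuous.comp (continuous_subtype_val.comp continuous_fst))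
      (f.continuous.comp (continuous_subtype_val.comp continuous_snd))
  obtain ⟨F, hFc, hFU⟩ := TopologicalSpace.isOpen_iUnion_countable U hU
  -- `0` is added only so that the countable family is nonempty and can be enumerated.
  obtain ⟨L, hL⟩ := (hFc.insert 0).exists_eq_range (insert_nonempty _ _)
  refine ⟨L, fun x hx y hy hxy => by_contra fun hne => ?_⟩
  obtain ⟨f, hf⟩ := SeparatingDual.exists_separating_of_ne (R := R) hne
  have : ((⟨x, hx⟩, ⟨y, hy⟩) : X × X) ∈ ⋃ f ∈ F, U f := hFU ▸ mem_iUnion.2 ⟨f, hf⟩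
  obtain ⟨g, hgF, hg⟩ := mem_iUnion₂.1 this
  obtain ⟨n, rfl⟩ : g ∈ range L := hL ▸ mem_insert_of_mem _ hgF
  exact hg (hxy n)

theorem SeparatingDual.exists_seq_injOn_abs_le {V : Type*} [AddCommGroup V] [TopologicalSpace V]
    [Module ℝ V] [SeparatingDual ℝ V] {X : Set V} (hX : IsCompact X) [SecondCountableTopology X] :
    ∃ u : ℕ → StrongDual ℝ V, (∀ x ∈ X, ∀ y ∈ X, (∀ n, u n x = u n y) → x = y) ∧
      ∀ n, ∀ x ∈ X, |u n x| ≤ (1 / 2) ^ n := by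
  obtain ⟨L, hL⟩ := SeparatingDual.exists_seq_injOn (R := ℝ) X
  have hbound : ∀ n, ∃ C > 0, ∀ x ∈ X, |L n x| ≤ C := fun n => by
    obtain ⟨C, hC⟩ := hX.exists_bound_of_continuousOn (L n).continuous.continuousOn
    exact ⟨max C 1, lt_max_of_lt_right one_pos, fun x hx => (hC x hx).trans (le_max_left _ _)⟩
  choose C hCpos hC using hbound
  have hc : ∀ n, 0 < (1 / 2 : ℝ) ^ n / C n := fun n => div_pos (by positivity) (hCpos n)
  refine ⟨fun n => ((1 / 2) ^ n / C n) • L n, fun x hx y hy hxy => hL x hx y hy fun n => ?_,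
    fun n x hx => ?_⟩
  · simpa [(hCpos n).ne'] using hxy n
  · rw [smul_apply, smul_eq_mul, abs_mul, abs_of_pos (hc n)]
    calc (1 / 2) ^ n / C n * |L n x| ≤ (1 / 2) ^ n / C n * C n :=
          mul_le_mul_of_nonneg_left (hC n x hx) (hc n).le
      _ = (1 / 2) ^ n := div_mul_cancel₀ _ (hCpos n).ne'

theorem memℓp_two_of_abs_le {a b : ℕ → ℝ} (hb : Summable fun n => b n ^ 2)
    (h : ∀ n, |a n| ≤ b n) : Memℓp a 2 := by
  refine memℓp_gen ?_
  simp only [ENNReal.toReal_ofNat, Real.rpow_two, Real.norm_eq_abs]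
  exact hb.of_nonneg_of_le (fun n => by positivity)
    fun n => pow_le_pow_left₀ (abs_nonneg _) (h n) 2

theorem continuousOn_of_continuousOn_inner {α E : Type*} [TopologicalSpace α]
    [NormedAddCommGroup E] [InnerProductSpace ℝ E] {T : α → E} {s : Set α}
    (h : ContinuousOn (fun p : α × α => ⟪T p.1, T p.2⟫_ℝ) (s ×ˢ s)) : ContinuousOn T s := by
  intro y hy
  set k := fun p : α × α => ⟪T p.1, T p.2⟫_ℝ
  have hk {f : α → α × α} (hf : ContinuousWithinAt f s y) (hfs : MapsTo f s (s ×ˢ s))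
      (hfy : f y = (y, y)) : ContinuousWithinAt (k ∘ f) s y :=
    (hfy ▸ h (y, y) ⟨hy, hy⟩).comp hf hfs
  have hdist : ContinuousWithinAt (fun x => √(k (x, x) - k (x, y) - k (y, x) + k (y, y))) s y :=
    (((((hk (continuousWithinAt_id.prodMk continuousWithinAt_id) (fun x hx => ⟨hx, hx⟩) rfl).sub
      (hk (continuousWithinAt_id.prodMk continuousWithinAt_const) (fun x hx => ⟨hx, hy⟩) rfl)).sub
      (hk (continuousWithinAt_const.prodMk continuousWithinAt_id) (fun x hx => ⟨hy, hx⟩) rfl)).add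
      continuousWithinAt_const).sqrt)
  rw [ContinuousWithinAt, tendsto_iff_norm_sub_tendsto_zero]
  convert hdist.tendsto using 2 with x
  · simp only [k, norm_eq_sqrt_real_inner, inner_sub_left, inner_sub_right]
    ring_nf
  · simp

open Classical in
/-- The junk value `0` is taken when `(u n x)ₙ` is not square-summable. -/
noncomputable def toL2 {α : Type*} (u : ℕ → α → ℝ) (x : α) : ℓ²(ℕ, ℝ) :=
  if h : Memℓp (fun n => u n x) 2 then ⟨fun n => u n x, h⟩ else 0

section toL2

variable {α : Type*} {u : ℕ → α → ℝ} {x y : α}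

theorem coe_toL2 (hx : Memℓp (fun n => u n x) 2) : ⇑(toL2 u x) = fun n => u n x := by
  simp only [toL2, hx, dite_true]

theorem inner_toL2 (hx : Memℓp (fun n => u n x) 2) (hy : Memℓp (fun n => u n y) 2) :
    ⟪toL2 u x, toL2 u y⟫_ℝ = ∑' n, u n x * u n y := by
  simp [lp.inner_eq_tsum, coe_toL2 hx, coe_toL2 hy, mul_comm]

theorem toL2_injOn {X : Set α} (hmem : ∀ x ∈ X, Memℓp (fun n => u n x) 2)
    (hsep : ∀ x ∈ X, ∀ y ∈ X, (∀ n, u n x = u n y) → x = y) : InjOn (toL2 u) X :=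
  fun x hx y hy hxy => hsep x hx y hy <| congrFun <| by
    rw [← coe_toL2 (hmem x hx), hxy, coe_toL2 (hmem y hy)]

theorem continuousOn_toL2 [TopologicalSpace α] {X : Set α} {b : ℕ → ℝ}
    (hb : Summable fun n => b n ^ 2) (hu : ∀ n, ∀ x ∈ X, |u n x| ≤ b n)
    (hcont : ∀ n, ContinuousOn (u n) X) : ContinuousOn (toL2 u) X := by
  have hmem : ∀ x ∈ X, Memℓp (fun n => u n x) 2 := fun x hx =>
    memℓp_two_of_abs_le hb (hu · x hx)
  refine continuousOn_of_continuousOn_inner <|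
    (continuousOn_tsum (u := fun n => b n ^ 2) (fun n => ?_) hb fun n p hp => ?_).congr
      fun p hp => inner_toL2 (hmem _ hp.1) (hmem _ hp.2)
  · exact ((hcont n).comp continuousOn_fst fun p hp => hp.1).mul
      ((hcont n).comp continuousOn_snd fun p hp => hp.2)
  · rw [Real.norm_eq_abs, abs_mul, sq]
    exact mul_le_mul (hu n _ hp.1) (hu n _ hp.2) (abs_nonneg _)
      ((abs_nonneg _).trans (hu n _ hp.1))

end toL2

theorem toL2_smul_add_smul {S : Type*} [AddCommGroup S] [Module ℝ S] {u : ℕ → S →ₗ[ℝ] ℝ}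
    {x y : S} (hx : Memℓp (fun n => u n x) 2) (hy : Memℓp (fun n => u n y) 2) (a c : ℝ) :
    toL2 (fun n => u n) (a • x + c • y) =
      a • toL2 (fun n => u n) x + c • toL2 (fun n => u n) y := by
  have hcomb : (fun n => u n (a • x + c • y)) = a • (fun n => u n x) + c • fun n => u n y := by
    ext n; simp
  have hmem : Memℓp (fun n => u n (a • x + c • y)) 2 :=
    hcomb ▸ (hx.const_smul a).add (hy.const_smul c)
  ext1
  rw [lp.coeFn_add, lp.coeFn_smul, lp.coeFn_smul, coe_toL2 hmem, coe_toL2 hx, coe_toL2 hy, hcomb]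

theorem IsCompact.exists_affine_injOn_l2 {S : Type*} [AddCommGroup S] [Module ℝ S]
    [TopologicalSpace S] [SeparatingDual ℝ S] {X : Set S} (hX : IsCompact X)
    [SecondCountableTopology X] :
    ∃ T : S → ℓ²(ℕ, ℝ), ContinuousOn T X ∧ InjOn T X ∧
      ∀ a ∈ X, ∀ b ∈ X, ∀ t : ℝ, T (t • a + (1 - t) • b) = t • T a + (1 - t) • T b := by
  obtain ⟨u, hsep, hu⟩ := SeparatingDual.exists_seq_injOn_abs_le hX
  have hb : Summable fun n : ℕ => ((1 / 2 : ℝ) ^ n) ^ 2 := by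
    simp_rw [← pow_mul, mul_comm _ 2, pow_mul]
    exact summable_geometric_of_lt_one (by positivity) (by norm_num)
  have hmem : ∀ x ∈ X, Memℓp (fun n => u n x) 2 := fun x hx =>
    memℓp_two_of_abs_le hb (hu · x hx)
  exact ⟨toL2 fun n => u n, continuousOn_toL2 hb hu fun n => (u n).continuous.continuousOn,
    toL2_injOn hmem hsep, fun x hx y hy t =>
      toL2_smul_add_smul (u := fun n => (u n).toLinearMap) (hmem x hx) (hmem y hy) t (1 - t)⟩

theorem real_inner_lt_inner_self_of_norm_le {E : Type*} [NormedAddCommGroup E]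
    [InnerProductSpace ℝ E] {x e : E} (h : ‖x‖ ≤ ‖e‖) (hne : x ≠ e) : ⟪e, x⟫_ℝ < ⟪e, e⟫_ℝ := by
  have hpos : 0 < ‖x - e‖ := norm_pos_iff.2 (sub_ne_zero.2 hne)
  have hsq : ‖x‖ ^ 2 ≤ ‖e‖ ^ 2 := pow_le_pow_left₀ (norm_nonneg _) h 2
  rw [real_inner_self_eq_norm_sq, real_inner_comm]
  nlinarith [norm_sub_sq_real x e]

theorem exists_exposed_of_injOn {S E : Type*} [AddCommGroup S] [Module ℝ S] [TopologicalSpace S]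
    [NormedAddCommGroup E] [InnerProductSpace ℝ E] {X K : Set S} {T : S → E}
    (hT : ContinuousOn T X)
    (hTaff : ∀ a ∈ X, ∀ b ∈ X, ∀ t ∈ Icc (0 : ℝ) 1,
      T (t • a + (1 - t) • b) = t • T a + (1 - t) • T b)
    (hinj : InjOn T K) (hKX : K ⊆ X) (hK : IsCompact K) (hKne : K.Nonempty) :
    ∃ e ∈ K, ∃ φ : S → ℝ, IsAffOn X φ ∧ ∀ x ∈ K, x ≠ e → φ x < φ e := by
  obtain ⟨e, heK, hemax⟩ :=
    hK.exists_isMaxOn hKne ((continuous_norm.comp_continuousOn hT).mono hKX)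
  refine ⟨e, heK, fun x => ⟪T e, T x⟫_ℝ,
    ⟨(continuous_const.inner continuous_id).comp_continuousOn hT, fun a ha b hb t ht => ?_⟩,
    fun x hx hxe => ?_⟩
  · simp only [hTaff a ha b hb t ht, inner_add_right, real_inner_smul_right]
  · simpa only [real_inner_self_eq_norm_sq] using
      real_inner_lt_inner_self_of_norm_le (hemax hx) (hinj.ne hx heK hxe)

theorem extremeIn_of_isAffOn_of_lt {S : Type*} [AddCommGroup S] [Module ℝ S] [TopologicalSpace S]
    {X K : Set S} {φ : S → ℝ} {e : S} (hKX : K ⊆ X) (hφ : IsAffOn X φ) (he : e ∈ K)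
    (hmax : ∀ x ∈ K, x ≠ e → φ x < φ e) : ExtremeIn K e := by
  have hle : ∀ x ∈ K, φ x ≤ φ e := fun x hx =>
    (eq_or_ne x e).elim (fun h => h ▸ le_rfl) fun h => (hmax x hx h).le
  refine ⟨he, fun y hy z hz α hα0 hα1 hyz => ?_⟩
  have hcomb : φ e = α * φ y + (1 - α) * φ z := by
    rw [hyz]; exact hφ.2 y (hKX hy) z (hKX hz) α ⟨hα0.le, hα1.le⟩
  constructor <;> by_contra hne
  · nlinarith [hmax y hy (Ne.symm hne), hle z hz]
  · nlinarith [hmax z hz (Ne.symm hne), hle y hy]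

theorem stmt12_general {S : Type*} [AddCommGroup S] [Module ℝ S] [TopologicalSpace S]
    [IsTopologicalAddGroup S] [ContinuousSMul ℝ S] [LocallyConvexSpace ℝ S] [T2Space S]
    (X : Set S) (hXcomp : IsCompact X)
    (hXmet : TopologicalSpace.MetrizableSpace X)
    (K : Set S) (hKX : K ⊆ X) (hKne : K.Nonempty) (hKcl : IsClosed K) :
    (∃ e ∈ K, ∃ φ : S → ℝ, IsAffOn X φ ∧ ∀ x ∈ K, x ≠ e → φ x < φ e) ∧
    (∀ e ∈ K, (∃ φ : S → ℝ, IsAffOn X φ ∧ ∀ x ∈ K, x ≠ e → φ x < φ e) →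
      ExtremeIn K e) := by
  have : CompactSpace X := isCompact_iff_compactSpace.mp hXcomp
  obtain ⟨T, hT, hinj, hTaff⟩ := hXcomp.exists_affine_injOn_l2
  exact ⟨exists_exposed_of_injOn hT (fun a ha b hb t _ => hTaff a ha b hb t) (hinj.mono hKX) hKX
    (hXcomp.of_isClosed_subset hKcl hKX) hKne,
    fun e he ⟨φ, hφ, hmax⟩ => extremeIn_of_isAffOn_of_lt hKX hφ he hmax⟩

theorem stmt12 {S : Type*} [AddCommGroup S] [Module ℝ S] [TopologicalSpace S]
    [IsTopologicalAddGroup S] [ContinuousSMul ℝ S] [LocallyConvexSpace ℝ S] [T2Space S]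
    (X : Set S) (hXne : X.Nonempty) (hXconv : Convex ℝ X) (hXcomp : IsCompact X)
    (hXmet : TopologicalSpace.MetrizableSpace X)
    (K : Set S) (hKX : K ⊆ X) (hKne : K.Nonempty) (hKcl : IsClosed K) :
    (∃ e ∈ K, ∃ φ : S → ℝ, IsAffOn X φ ∧ ∀ x ∈ K, x ≠ e → φ x < φ e) ∧
    (∀ e ∈ K, (∃ φ : S → ℝ, IsAffOn X φ ∧ ∀ x ∈ K, x ≠ e → φ x < φ e) →
      ExtremeIn K e) :=
  stmt12_general X hXcomp hXmet K hKX hKne hKcl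
end

section
/- Let X be a nonempty convex compact metrizable subset of a Hausdorff locally convex topological vector space, K ⊆ X nonempty closed, I a nonempty set, and for each i ∈ I let f_i : K → ℝ be an upper semicontinuous Aff(X)-convex function. If ⋂_{i∈I} K_max(f_i) ≠ ∅, then AExp(⋂_{i∈I} K_max(f_i)) ∩ Ext(K) ≠ ∅; in particular there is a common extreme point e of K at which every f_i attains its maximum over K. -/
/-!
The intersection `M` of the sets of maximisers is a compact extreme subset of `K`, because each
`f i` is upper semicontinuous and Aff(X)-convex. As `X` is compact and metrizable, countably many
continuous linear functionals `h n`, scaled so that `|h n| ≤ 2⁻ⁿ` on `X`, separate its points, so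
`x ↦ (h n x)ₙ` embeds `X` affinely into `ℓ²`. A point `e ∈ M` farthest from the origin in this
embedding is strictly exposed in `M` by the continuous affine function `x ↦ ⟪e, x⟫`
(`‖x - e‖² > 0` and `‖x‖ ≤ ‖e‖` give `⟪e, x⟫ < ‖e‖²`), hence extreme in `M`, hence in `K`.
-/

open Set

section Extreme

variable {S : Type*} [AddCommGroup S] [Module ℝ S]

lemma extremeIn_of_mem_extremePoints {K : Set S} {e : S} (he : e ∈ K.extremePoints ℝ) :
    ExtremeIn K e := by
  refine ⟨he.1, fun y hy z hz α hα0 hα1 hyz => ?_⟩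
  have hseg : e ∈ openSegment ℝ y z := ⟨α, 1 - α, hα0, by linarith, by ring, hyz.symm⟩
  obtain ⟨hye, hze⟩ := (mem_extremePoints.1 he).2 y hy z hz hseg
  exact ⟨hye.symm, hze.symm⟩

lemma isExtreme_kmaxOn {K : Set S} {f : S → ℝ}
    (hf : ∀ a ∈ K, ∀ x ∈ K, ∀ y ∈ K, a ∈ segment ℝ x y →
      f x ≤ f a → f y ≤ f a → f x = f a ∧ f y = f a) :
    IsExtreme ℝ K (KmaxOn K f) := by
  refine ⟨fun x hx => hx.1, fun x hx y hy a ha hxy => ?_⟩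
  obtain ⟨hfx, -⟩ := hf a ha.1 x hx y hy (openSegment_subset_segment ℝ x y hxy)
    (ha.2 x hx) (ha.2 y hy)
  exact mem_sep hx fun w hw => hfx ▸ ha.2 w hw

lemma mem_extremePoints_of_isAffOn_of_strictMax [TopologicalSpace S] {X M : Set S}
    (hMX : M ⊆ X) {φ : S → ℝ} (hφ : IsAffOn X φ) {e : S} (he : e ∈ M)
    (hmax : ∀ x ∈ M, x ≠ e → φ x < φ e) : e ∈ M.extremePoints ℝ := by
  refine mem_extremePoints_iff_left.2 ⟨he, fun y hy z hz ⟨a, b, ha, hb, hab, hyz⟩ => ?_⟩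
  by_contra hye
  obtain rfl : b = 1 - a := by linarith
  have hφe : φ e = a * φ y + (1 - a) * φ z := by
    rw [← hyz]; exact hφ.2 y (hMX hy) z (hMX hz) a ⟨ha.le, by linarith⟩
  have hφz : φ z ≤ φ e := by
    rcases eq_or_ne z e with rfl | hze
    · rfl
    · exact (hmax z hz hze).le
  nlinarith [hmax y hy hye]

end Extreme

lemma isClosed_kmaxOn {S : Type*} [TopologicalSpace S] {K : Set S} {f : S → ℝ}
    (hK : IsClosed K) (hf : UpperSemicontinuousOn f K) : IsClosed (KmaxOn K f) := by
  have hsuper : ∀ c, IsClosed (K ∩ f ⁻¹' Ici c) := fun c => by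
    obtain ⟨v, hv, hKv⟩ := upperSemicontinuousOn_iff_preimage_Ici.1 hf c
    exact hKv ▸ hK.inter hv
  have hKmax : KmaxOn K f = K ∩ ⋂ y ∈ K, (K ∩ f ⁻¹' Ici (f y)) := by
    ext x
    simp only [KmaxOn, mem_sep_iff, mem_inter_iff, mem_iInter, mem_preimage, mem_Ici]
    exact ⟨fun h => ⟨h.1, fun y hy => ⟨h.1, h.2 y hy⟩⟩, fun h => ⟨h.1, fun y hy => (h.2 y hy).2⟩⟩
  rw [hKmax]
  exact hK.inter (isClosed_biInter fun y _ => hsuper (f y))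

section Separation

variable {S : Type*} [AddCommGroup S] [Module ℝ S] [TopologicalSpace S]
  [IsTopologicalAddGroup S] [ContinuousSMul ℝ S] [LocallyConvexSpace ℝ S] [T1Space S]

lemma exists_seq_continuousLinearMap_separating (X : Set S) [SecondCountableTopology X] :
    ∃ g : ℕ → S →L[ℝ] ℝ, ∀ x ∈ X, ∀ y ∈ X, x ≠ y → ∃ n, g n x ≠ g n y := by
  let U : (S →L[ℝ] ℝ) → Set (X × X) := fun g => {p | g p.1 ≠ g p.2}
  have hU : ∀ g, IsOpen (U g) := fun g =>
    isOpen_ne_fun (g.continuous.comp (continuous_subtype_val.comp continuous_fst))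
      (g.continuous.comp (continuous_subtype_val.comp continuous_snd))
  obtain ⟨T, hTc, hTU⟩ := TopologicalSpace.isOpen_iUnion_countable U hU
  obtain ⟨g, hTg⟩ := countable_iff_exists_subset_range.1 hTc
  refine ⟨g, fun x hx y hy hxy => ?_⟩
  obtain ⟨ψ, hψ⟩ := geometric_hahn_banach_point_point hxy
  have hxyU : (⟨⟨x, hx⟩, ⟨y, hy⟩⟩ : X × X) ∈ ⋃ ψ ∈ T, U ψ :=
    hTU ▸ mem_iUnion.2 ⟨ψ, hψ.ne⟩
  obtain ⟨ψ', hψ'T, hψ'⟩ := mem_iUnion₂.1 hxyU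
  obtain ⟨n, rfl⟩ := hTg hψ'T
  exact ⟨n, hψ'⟩

lemma exists_seq_continuousLinearMap_separating_bounded {X : Set S} (hX : IsCompact X)
    [SecondCountableTopology X] :
    ∃ h : ℕ → S →L[ℝ] ℝ, (∀ n, ∀ x ∈ X, |h n x| ≤ (1 / 2 : ℝ) ^ n) ∧
      ∀ x ∈ X, ∀ y ∈ X, x ≠ y → ∃ n, h n x ≠ h n y := by
  obtain ⟨g, hg⟩ := exists_seq_continuousLinearMap_separating X
  choose C hC using fun n => hX.exists_bound_of_continuousOn (g n).continuous.continuousOn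
  set c : ℕ → ℝ := fun n => (1 / 2 : ℝ) ^ n / (1 + |C n|)
  have hc : ∀ n, 0 < c n := fun n => by positivity
  refine ⟨fun n => c n • g n, fun n x hx => ?_, fun x hx y hy hxy => ?_⟩
  · have hgx : |g n x| ≤ 1 + |C n| := by
      have := hC n x hx
      rw [Real.norm_eq_abs] at this
      linarith [le_abs_self (C n)]
    calc |(c n • g n) x| = c n * |g n x| := by
          rw [show (c n • g n) x = c n * g n x from rfl, abs_mul, abs_of_pos (hc n)]
      _ ≤ c n * (1 + |C n|) := by gcongr
      _ = (1 / 2 : ℝ) ^ n := div_mul_cancel₀ _ (by positivity)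
  · obtain ⟨n, hn⟩ := hg x hx y hy hxy
    exact ⟨n, fun h => hn (mul_left_cancel₀ (hc n).ne' h)⟩

end Separation

section SeqPairing

variable {S : Type*} [AddCommGroup S] [Module ℝ S] [TopologicalSpace S]
  {X : Set S} {h : ℕ → S →L[ℝ] ℝ}

noncomputable def seqPairing (h : ℕ → S →L[ℝ] ℝ) (a b : S) : ℝ := ∑' n, h n a * h n b

lemma abs_mul_le_of_bounded (hh : ∀ n, ∀ x ∈ X, |h n x| ≤ (1 / 2 : ℝ) ^ n) {a b : S}
    (ha : a ∈ X) (hb : b ∈ X) (n : ℕ) : |h n a * h n b| ≤ (1 / 2 : ℝ) ^ n := by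
  have hone : |h n b| ≤ 1 := (hh n b hb).trans (pow_le_one₀ (by norm_num) (by norm_num))
  calc |h n a * h n b| = |h n a| * |h n b| := abs_mul _ _
    _ ≤ (1 / 2 : ℝ) ^ n * 1 := mul_le_mul (hh n a ha) hone (abs_nonneg _) (by positivity)
    _ = (1 / 2 : ℝ) ^ n := mul_one _

lemma summable_mul_of_bounded (hh : ∀ n, ∀ x ∈ X, |h n x| ≤ (1 / 2 : ℝ) ^ n) {a b : S}
    (ha : a ∈ X) (hb : b ∈ X) : Summable fun n => h n a * h n b :=
  Summable.of_norm_bounded summable_geometric_two fun n => abs_mul_le_of_bounded hh ha hb n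

lemma continuousOn_seqPairing_self (hh : ∀ n, ∀ x ∈ X, |h n x| ≤ (1 / 2 : ℝ) ^ n) :
    ContinuousOn (fun x => seqPairing h x x) X :=
  continuousOn_tsum (fun n => ((h n).continuous.mul (h n).continuous).continuousOn)
    summable_geometric_two fun n _ hx => abs_mul_le_of_bounded hh hx hx n

lemma isAffOn_seqPairing (hh : ∀ n, ∀ x ∈ X, |h n x| ≤ (1 / 2 : ℝ) ^ n) {a : S} (ha : a ∈ X) :
    IsAffOn X (seqPairing h a) := by
  refine ⟨continuousOn_tsum (fun n => (continuous_const.mul (h n).continuous).continuousOn)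
    summable_geometric_two fun n _ hx => abs_mul_le_of_bounded hh ha hx n,
    fun x hx y hy t _ => ?_⟩
  have hxs := summable_mul_of_bounded hh ha hx
  have hys := summable_mul_of_bounded hh ha hy
  calc seqPairing h a (t • x + (1 - t) • y)
      = ∑' n, (t * (h n a * h n x) + (1 - t) * (h n a * h n y)) := by
        refine tsum_congr fun n => ?_
        rw [map_add, map_smul, map_smul, smul_eq_mul, smul_eq_mul]
        ring
    _ = t * seqPairing h a x + (1 - t) * seqPairing h a y := by
        rw [(hxs.mul_left t).tsum_add (hys.mul_left (1 - t)), hxs.tsum_mul_left,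
          hys.tsum_mul_left]
        rfl

lemma hasSum_sq_sub_seqPairing (hh : ∀ n, ∀ x ∈ X, |h n x| ≤ (1 / 2 : ℝ) ^ n) {a b : S}
    (ha : a ∈ X) (hb : b ∈ X) :
    HasSum (fun n => (h n a - h n b) ^ 2)
      (seqPairing h a a - 2 * seqPairing h b a + seqPairing h b b) := by
  have haa := (summable_mul_of_bounded hh ha ha).hasSum
  have hba := (summable_mul_of_bounded hh hb ha).hasSum
  have hbb := (summable_mul_of_bounded hh hb hb).hasSum
  exact ((haa.sub (hba.mul_left 2)).add hbb).congr_fun fun n => by ring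

lemma seqPairing_lt_of_le (hh : ∀ n, ∀ x ∈ X, |h n x| ≤ (1 / 2 : ℝ) ^ n)
    (hsep : ∀ x ∈ X, ∀ y ∈ X, x ≠ y → ∃ n, h n x ≠ h n y) {x e : S} (hx : x ∈ X) (he : e ∈ X)
    (hxe : x ≠ e) (hle : seqPairing h x x ≤ seqPairing h e e) :
    seqPairing h e x < seqPairing h e e := by
  obtain ⟨n, hn⟩ := hsep x hx e he hxe
  have hpos : 0 < seqPairing h x x - 2 * seqPairing h e x + seqPairing h e e :=
    hasSum_lt (i := n) (fun m => sq_nonneg (h m x - h m e))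
      (pow_two_pos_of_ne_zero (sub_ne_zero.2 hn)) hasSum_zero (hasSum_sq_sub_seqPairing hh hx he)
  linarith

end SeqPairing

lemma exists_isAffOn_strictMax_of_isCompact {S : Type*} [AddCommGroup S] [Module ℝ S]
    [TopologicalSpace S] [IsTopologicalAddGroup S] [ContinuousSMul ℝ S] [LocallyConvexSpace ℝ S]
    [T1Space S] {X M : Set S} (hX : IsCompact X) [SecondCountableTopology X]
    (hMX : M ⊆ X) (hM : IsCompact M) (hMne : M.Nonempty) :
    ∃ e ∈ M, ∃ φ : S → ℝ, IsAffOn X φ ∧ ∀ x ∈ M, x ≠ e → φ x < φ e := by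
  obtain ⟨h, hh, hsep⟩ := exists_seq_continuousLinearMap_separating_bounded hX
  obtain ⟨e, heM, hmax⟩ := hM.exists_isMaxOn hMne ((continuousOn_seqPairing_self hh).mono hMX)
  exact ⟨e, heM, seqPairing h e, isAffOn_seqPairing hh (hMX heM), fun x hx hxe =>
    seqPairing_lt_of_le hh hsep (hMX hx) (hMX heM) hxe (hmax hx)⟩

theorem stmt13_general {S : Type*} [AddCommGroup S] [Module ℝ S] [TopologicalSpace S]
    [IsTopologicalAddGroup S] [ContinuousSMul ℝ S] [LocallyConvexSpace ℝ S] [T2Space S]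
    (X : Set S) (hXcomp : IsCompact X)
    (hXmet : TopologicalSpace.MetrizableSpace X)
    (K : Set S) (hKX : K ⊆ X) (hKcl : IsClosed K)
    {I : Type*} [Nonempty I] (f : I → S → ℝ)
    (husc : ∀ i, UpperSemicontinuousOn (f i) K)
    (hconv : ∀ i, ∀ a ∈ K, ∀ x ∈ K, ∀ y ∈ K, a ∈ segment ℝ x y →
      f i x ≤ f i a → f i y ≤ f i a → f i x = f i a ∧ f i y = f i a)
    (hne : (⋂ i, KmaxOn K (f i)).Nonempty) :
    ∃ e ∈ ⋂ i, KmaxOn K (f i),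
      (∃ φ : S → ℝ, IsAffOn X φ ∧
        ∀ x ∈ ⋂ i, KmaxOn K (f i), x ≠ e → φ x < φ e) ∧
      ExtremeIn K e := by
  have := hXmet
  have : CompactSpace X := isCompact_iff_compactSpace.mp hXcomp
  set M := ⋂ i, KmaxOn K (f i)
  have hMext : IsExtreme ℝ K M := isExtreme_iInter fun i => isExtreme_kmaxOn (hconv i)
  have hMcomp : IsCompact M := (hXcomp.of_isClosed_subset hKcl hKX).of_isClosed_subset
    (isClosed_iInter fun i => isClosed_kmaxOn hKcl (husc i)) hMext.subset
  obtain ⟨e, heM, φ, hφ, hmax⟩ :=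
    exists_isAffOn_strictMax_of_isCompact hXcomp (hMext.subset.trans hKX) hMcomp hne
  exact ⟨e, heM, ⟨φ, hφ, hmax⟩, extremeIn_of_mem_extremePoints <|
    hMext.extremePoints_subset_extremePoints <|
      mem_extremePoints_of_isAffOn_of_strictMax (hMext.subset.trans hKX) hφ heM hmax⟩

theorem stmt13 {S : Type*} [AddCommGroup S] [Module ℝ S] [TopologicalSpace S]
    [IsTopologicalAddGroup S] [ContinuousSMul ℝ S] [LocallyConvexSpace ℝ S] [T2Space S]
    (X : Set S) (hXne : X.Nonempty) (hXconv : Convex ℝ X) (hXcomp : IsCompact X)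
    (hXmet : TopologicalSpace.MetrizableSpace X)
    (K : Set S) (hKX : K ⊆ X) (hKne : K.Nonempty) (hKcl : IsClosed K)
    {I : Type*} [Nonempty I] (f : I → S → ℝ)
    (husc : ∀ i, UpperSemicontinuousOn (f i) K)
    (hconv : ∀ i, ∀ a ∈ K, ∀ x ∈ K, ∀ y ∈ K, a ∈ segment ℝ x y →
      f i x ≤ f i a → f i y ≤ f i a → f i x = f i a ∧ f i y = f i a)
    (hne : (⋂ i, KmaxOn K (f i)).Nonempty) :
    ∃ e ∈ ⋂ i, KmaxOn K (f i),
      (∃ φ : S → ℝ, IsAffOn X φ ∧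
        ∀ x ∈ ⋂ i, KmaxOn K (f i), x ≠ e → φ x < φ e) ∧
      ExtremeIn K e :=
  stmt13_general X hXcomp hXmet K hKX hKcl f husc hconv hne
end

section
/- Let X be a nonempty convex compact metrizable subset of a Hausdorff locally convex topological vector space, and I a nonempty set. If f_i : X → ℝ are strictly quasi-convex upper semicontinuous functions for i ∈ I with ⋂_{i∈I} X_max(f_i) ≠ ∅, then there exists a common extreme point e of X such that f_i(e) = max_X f_i for all i ∈ I. -/
/-! A maximizer `x = α y + (1 - α) z` with `y ≠ z` would give `g x < max (g y) (g z) ≤ g x`,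
so every common maximizer is already the required extreme point. -/

theorem extremeIn_of_mem_kmaxOn {S : Type*} [AddCommGroup S] [Module ℝ S]
    {K : Set S} {g : S → ℝ} {x : S}
    (hg : ∀ y ∈ K, ∀ z ∈ K, y ≠ z → ∀ t : ℝ, 0 < t → t < 1 →
      g (t • y + (1 - t) • z) < max (g y) (g z))
    (hx : x ∈ KmaxOn K g) : ExtremeIn K x := by
  refine ⟨hx.1, fun y hy z hz α hα0 hα1 hxyz => ?_⟩
  by_cases hyz : y = z
  · subst hyz
    rw [hxyz, Convex.combo_self (by ring)]
    exact ⟨rfl, rfl⟩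
  · have hlt := hg y hy z hz hyz α hα0 hα1
    rw [← hxyz] at hlt
    exact absurd (max_le (hx.2 y hy) (hx.2 z hz)) hlt.not_ge

theorem stmt14_general {S : Type*} [AddCommGroup S] [Module ℝ S]
    (X : Set S)
    {I : Type*} [Nonempty I] (f : I → S → ℝ)
    (hqc : ∀ i, ∀ y ∈ X, ∀ z ∈ X, y ≠ z → ∀ t : ℝ, 0 < t → t < 1 →
      f i (t • y + (1 - t) • z) < max (f i y) (f i z))
    (hne : (⋂ i, KmaxOn X (f i)).Nonempty) :
    ∃ e, ExtremeIn X e ∧ ∀ i, ∀ y ∈ X, f i y ≤ f i e := by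
  obtain ⟨e, he⟩ := hne
  have hmax : ∀ i, e ∈ KmaxOn X (f i) := Set.mem_iInter.mp he
  obtain ⟨i₀⟩ := ‹Nonempty I›
  exact ⟨e, extremeIn_of_mem_kmaxOn (hqc i₀) (hmax i₀), fun i => (hmax i).2⟩

theorem stmt14 {S : Type*} [AddCommGroup S] [Module ℝ S] [TopologicalSpace S]
    [IsTopologicalAddGroup S] [ContinuousSMul ℝ S] [LocallyConvexSpace ℝ S] [T2Space S]
    (X : Set S) (hXne : X.Nonempty) (hXconv : Convex ℝ X) (hXcomp : IsCompact X)
    (hXmet : TopologicalSpace.MetrizableSpace X)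
    {I : Type*} [Nonempty I] (f : I → S → ℝ)
    (husc : ∀ i, UpperSemicontinuousOn (f i) X)
    (hqc : ∀ i, ∀ y ∈ X, ∀ z ∈ X, y ≠ z → ∀ t : ℝ, 0 < t → t < 1 →
      f i (t • y + (1 - t) • z) < max (f i y) (f i z))
    (hne : (⋂ i, KmaxOn X (f i)).Nonempty) :
    ∃ e, ExtremeIn X e ∧ ∀ i, ∀ y ∈ X, f i y ≤ f i e :=
  stmt14_general X f hqc hne
end

section
/- (Bauer's maximum principle, metrizable case) Let X be a nonempty convex compact metrizable subset of a Hausdorff locally convex topological vector space, and f : X → ℝ convex and upper semicontinuous. Then f attains its maximum at an extreme point of X: X_max(f) ∩ Ext(X) ≠ ∅. -/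
/-!
The maximizers of `f` form a nonempty compact set (upper semicontinuity on a compact set), and
convexity makes this set an extreme subset of `X`: if an interior point of a segment in `X` is a
maximizer, both endpoints must be maximizers. By the Krein–Milman lemma the set of maximizers has
an extreme point, which is then an extreme point of `X`.
-/

open Set

theorem ConvexOn.isExtreme_inter_preimage_Ici {𝕜 E β : Type*} [Semiring 𝕜] [PartialOrder 𝕜]
    [AddCommMonoid E] [SMul 𝕜 E] [AddCommMonoid β] [LinearOrder β] [IsOrderedCancelAddMonoid β]
    [Module 𝕜 β] [PosSMulStrictMono 𝕜 β] {s : Set E} {f : E → β} {c : β}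
    (hf : ConvexOn 𝕜 s f) (hc : ∀ x ∈ s, f x ≤ c) :
    IsExtreme 𝕜 s (s ∩ f ⁻¹' Ici c) :=
  ⟨inter_subset_left, fun _ hx _ hy _ hz hzxy =>
    ⟨hx, hz.2.trans (hf.le_left_of_right_le hx hy hzxy ((hc _ hy).trans hz.2))⟩⟩

theorem IsCompact.exists_mem_extremePoints_isMaxOn {E β : Type*} [AddCommGroup E] [Module ℝ E]
    [TopologicalSpace E] [T2Space E] [IsTopologicalAddGroup E] [ContinuousSMul ℝ E]
    [LocallyConvexSpace ℝ E] [AddCommMonoid β] [LinearOrder β] [IsOrderedCancelAddMonoid β]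
    [Module ℝ β] [PosSMulStrictMono ℝ β] {s : Set E} {f : E → β}
    (hs : IsCompact s) (hne : s.Nonempty) (hf : ConvexOn ℝ s f)
    (husc : UpperSemicontinuousOn f s) :
    ∃ e ∈ s.extremePoints ℝ, IsMaxOn f s e := by
  obtain ⟨m, hm, hmax⟩ := husc.exists_isMaxOn hne hs
  have hext : IsExtreme ℝ s (s ∩ f ⁻¹' Ici (f m)) :=
    hf.isExtreme_inter_preimage_Ici fun _ hx => hmax hx
  obtain ⟨e, he⟩ :=
    (husc.isCompact_inter_preimage_Ici hs (f m)).extremePoints_nonempty ⟨m, hm, le_rfl⟩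
  exact ⟨e, hext.extremePoints_subset_extremePoints he, fun _ hx => (hmax hx).trans he.1.2⟩

theorem extremeIn_of_mem_extremePoints_s15 {S : Type*} [AddCommGroup S] [Module ℝ S]
    {K : Set S} {x : S} (hx : x ∈ K.extremePoints ℝ) : ExtremeIn K x := by
  refine ⟨hx.1, fun y hy z hz α hα hα1 hxyz => ?_⟩
  obtain ⟨hyx, hzx⟩ := (mem_extremePoints.1 hx).2 y hy z hz
    ⟨α, 1 - α, hα, sub_pos.2 hα1, add_sub_cancel α 1, hxyz.symm⟩
  exact ⟨hyx.symm, hzx.symm⟩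

theorem stmt15_general {S : Type*} [AddCommGroup S] [Module ℝ S] [TopologicalSpace S]
    [IsTopologicalAddGroup S] [ContinuousSMul ℝ S] [LocallyConvexSpace ℝ S] [T2Space S]
    (X : Set S) (hXne : X.Nonempty) (hXcomp : IsCompact X)
    (f : S → ℝ) (hf : ConvexOn ℝ X f) (husc : UpperSemicontinuousOn f X) :
    ∃ e, ExtremeIn X e ∧ ∀ y ∈ X, f y ≤ f e := by
  obtain ⟨e, he, hmax⟩ := hXcomp.exists_mem_extremePoints_isMaxOn hXne hf husc
  exact ⟨e, extremeIn_of_mem_extremePoints_s15 he, fun _ hy => hmax hy⟩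

theorem stmt15 {S : Type*} [AddCommGroup S] [Module ℝ S] [TopologicalSpace S]
    [IsTopologicalAddGroup S] [ContinuousSMul ℝ S] [LocallyConvexSpace ℝ S] [T2Space S]
    (X : Set S) (hXne : X.Nonempty) (hXconv : Convex ℝ X) (hXcomp : IsCompact X)
    (hXmet : TopologicalSpace.MetrizableSpace X)
    (f : S → ℝ) (hf : ConvexOn ℝ X f) (husc : UpperSemicontinuousOn f X) :
    ∃ e, ExtremeIn X e ∧ ∀ y ∈ X, f y ≤ f e :=
  stmt15_general X hXne hXcomp f hf husc
end
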